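/- arXiv:1907.11960 — 9 statements merged into one kernel-verified Lean document; each statement's English description precedes it below -/
import Mathlib

section
/- Let M be a nonzero finitely generated module over a Noetherian local ring R. Then depth M ≤ min { dim R/p : p ∈ Ass(M) }. -/
open RingTheory.Sequence IsLocalRing Pointwise

/-- The depth of an `R`-module `M` with respect to an ideal `I`: the supremum of the
lengths of `M`-regular sequences consisting of elements of `I`. -/
noncomputable def idealDepth (R : Type*) [CommRing R] (I : Ideal R)
    (M : Type*) [AddCommGroup M] [Module R M] : ℕ∞ :=
  sSup {n : ℕ∞ | ∃ rs : List R, (rs.length : ℕ∞) = n ∧ (∀ r ∈ rs, r ∈ I) ∧ IsRegular M rs}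

/-- The depth of a module over a local ring, i.e. depth with respect to the maximal ideal. -/
noncomputable def localDepth (R : Type*) [CommRing R] [IsLocalRing R]
    (M : Type*) [AddCommGroup M] [Module R M] : ℕ∞ :=
  idealDepth R (maximalIdeal R) M

/-- `mdepth M = min { dim R/p : p ∈ Ass M }`. -/
noncomputable def mdepth (R : Type*) [CommRing R]
    (M : Type*) [AddCommGroup M] [Module R M] : WithBot ℕ∞ :=
  sInf {d : WithBot ℕ∞ | ∃ p ∈ associatedPrimes R M, d = ringKrullDim (R ⧸ p)}

section Aux

open Submodule

variable {R : Type*} [CommRing R]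

/-- Key step: if `x ∈ m` is regular on `M`, every associated prime of `M` is strictly
contained in an associated prime of `M ⧸ xM`. -/
lemma exists_gt_assoc_of_smulRegular [IsNoetherianRing R] [IsLocalRing R]
    {M : Type*} [AddCommGroup M] [Module R M] [Module.Finite R M]
    {x : R} (hx : x ∈ maximalIdeal R) (hreg : IsSMulRegular M x)
    {p : Ideal R} (hp : p ∈ associatedPrimes R M) :
    ∃ q ∈ associatedPrimes R (QuotSMulTop x M), p < q := by
  obtain ⟨hpprime, z, hz⟩ := isAssociatedPrime_iff.mp hp
  rw [Submodule.bot_colon'] at hz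
  have hz0 : z ≠ 0 := by
    rintro rfl
    exact hpprime.ne_top (by
      rw [hz, Submodule.span_singleton_eq_bot.mpr rfl, Submodule.annihilator_bot])
  set N : Submodule R M := Submodule.torsionBySet R M (p : Set R) with hN
  have hzN : z ∈ N := by
    rw [hN, Submodule.mem_torsionBySet_iff]
    rintro ⟨a, ha⟩
    have : a ∈ (R ∙ z).annihilator := hz ▸ ha
    rw [Submodule.mem_annihilator_span_singleton] at this
    exact this
  have hNle : ¬ (N ≤ x • (⊤ : Submodule R M)) := by
    intro hle
    have h1 : N ≤ Ideal.span {x} • N := by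
      intro n hn
      obtain ⟨m, -, rfl⟩ : ∃ m ∈ ((⊤ : Submodule R M) : Set M), x • m = n :=
        Set.mem_smul_set.mp (hle hn)
      have hm : m ∈ N := by
        rw [hN, Submodule.mem_torsionBySet_iff] at hn ⊢
        rintro ⟨a, ha⟩
        have h0 : x • (a • m) = x • (0 : M) := by
          rw [smul_zero, smul_comm]
          exact hn ⟨a, ha⟩
        exact hreg h0
      rw [Submodule.ideal_span_singleton_smul]
      exact Submodule.smul_mem_pointwise_smul m x N hm
    have h2 : N ≤ maximalIdeal R • N :=
      h1.trans (Submodule.smul_mono ((Ideal.span_singleton_le_iff_mem _).mpr hx) le_rfl)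
    have h3 : N = ⊥ := by
      refine Submodule.eq_bot_of_le_smul_of_le_jacobson_bot (maximalIdeal R) N
        (IsNoetherian.noetherian N) h2 ?_
      rw [IsLocalRing.jacobson_eq_maximalIdeal ⊥ bot_ne_top]
    exact hz0 (by simpa [h3] using hzN)
  obtain ⟨n, hnN, hnx⟩ := SetLike.not_le_iff_exists.mp hNle
  set π := (x • (⊤ : Submodule R M)).mkQ with hπ
  have hy0 : π n ≠ 0 := by
    rw [hπ, Submodule.mkQ_apply, ne_eq, Submodule.Quotient.mk_eq_zero]
    exact hnx
  obtain ⟨q, hq, hle⟩ :=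
    exists_le_isAssociatedPrime_of_isNoetherianRing R (π n) hy0
  rw [Submodule.bot_colon'] at hle
  have hp_le : p ≤ (R ∙ π n).annihilator := by
    intro a ha
    rw [Submodule.mem_annihilator_span_singleton, hπ, ← map_smul,
      Submodule.mkQ_apply, Submodule.Quotient.mk_eq_zero]
    have : a • n = 0 := by
      rw [hN, Submodule.mem_torsionBySet_iff] at hnN
      exact hnN ⟨a, ha⟩
    rw [this]
    exact Submodule.zero_mem _
  have hx_mem : x ∈ (R ∙ π n).annihilator := by
    rw [Submodule.mem_annihilator_span_singleton, hπ, ← map_smul,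
      Submodule.mkQ_apply, Submodule.Quotient.mk_eq_zero]
    exact Submodule.smul_mem_pointwise_smul n x ⊤ trivial
  have hxp : x ∉ p := by
    intro hxp
    rw [hz, Submodule.mem_annihilator_span_singleton] at hxp
    exact hz0 (hreg (show x • z = x • 0 by rw [hxp, smul_zero]))
  refine ⟨q, hq, lt_of_le_of_ne (hp_le.trans hle) ?_⟩
  rintro rfl
  exact hxp (hle hx_mem)

/-- By induction on a regular sequence, one gets a chain of primes above any
associated prime of `M` of the same length. -/
lemma exists_ltSeries_of_isWeaklyRegular {R : Type u} [CommRing R] [IsNoetherianRing R]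
    [IsLocalRing R] (rs : List R) :
    ∀ (M : Type v) [AddCommGroup M] [Module R M] [Module.Finite R M],
    (∀ r ∈ rs, r ∈ maximalIdeal R) → IsWeaklyRegular M rs →
    ∀ p ∈ associatedPrimes R M,
    ∃ c : LTSeries (PrimeSpectrum R), c.head.asIdeal = p ∧ c.length = rs.length := by
  induction rs with
  | nil =>
    intro M _ _ _ _ _ p hp
    exact ⟨RelSeries.singleton _ ⟨p, hp.isPrime⟩, rfl, rfl⟩
  | cons x rs ih =>
    intro M _ _ _ hmem hreg p hp
    rw [isWeaklyRegular_cons_iff] at hreg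
    obtain ⟨q, hq, hpq⟩ :=
      exists_gt_assoc_of_smulRegular (hmem x List.mem_cons_self) hreg.1 hp
    obtain ⟨c, hc1, hc2⟩ := ih (QuotSMulTop x M)
      (fun r hr => hmem r (List.mem_cons_of_mem _ hr)) hreg.2 q hq
    refine ⟨c.cons ⟨p, hp.isPrime⟩ ?_, ?_, ?_⟩
    · change (_ : PrimeSpectrum R) < _
      rw [← PrimeSpectrum.asIdeal_lt_asIdeal, hc1]
      exact hpq
    · rw [RelSeries.head_cons]
    · simp [hc2]

/-- A chain of primes starting at `p` gives a lower bound for `dim R/p`. -/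
lemma length_le_ringKrullDim_quotient {R : Type*} [CommRing R] {p : Ideal R} [p.IsPrime]
    (c : LTSeries (PrimeSpectrum R)) (hc : c.head.asIdeal = p) :
    (c.length : WithBot ℕ∞) ≤ ringKrullDim (R ⧸ p) := by
  classical
  have hmono : ∀ i, p ≤ (c i).asIdeal := by
    intro i
    rw [← hc]
    exact c.monotone (Fin.zero_le i)
  set f := Ideal.Quotient.mk p with hf
  have hfs : Function.Surjective f := Ideal.Quotient.mk_surjective
  have hker : ∀ i, Ideal.comap f ⊥ ≤ (c i).asIdeal := by
    intro i
    rw [← RingHom.ker_eq_comap_bot, Ideal.mk_ker]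
    exact hmono i
  let e := Ideal.relIsoOfSurjective f hfs
  let c' : LTSeries (PrimeSpectrum (R ⧸ p)) :=
    { length := c.length
      toFun := fun i => ⟨((c i).asIdeal).map f,
        Ideal.map_isPrime_of_surjective hfs (hker i)⟩
      step := fun i => by
        have h : (⟨(c i.castSucc).asIdeal, hker _⟩ : {J : Ideal R // Ideal.comap f ⊥ ≤ J}) <
            ⟨(c i.succ).asIdeal, hker _⟩ := by
          rw [Subtype.mk_lt_mk, PrimeSpectrum.asIdeal_lt_asIdeal]
          exact c.step i
        have := e.symm.lt_iff_lt.mpr h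
        change (_ : PrimeSpectrum (R ⧸ p)) < _
        rw [← PrimeSpectrum.asIdeal_lt_asIdeal]
        exact this }
  have : (c'.length : WithBot ℕ∞) ≤ Order.krullDim (PrimeSpectrum (R ⧸ p)) :=
    Order.LTSeries.length_le_krullDim c'
  exact this

end Aux

/-- depth M ≤ min { dim R/p : p ∈ Ass M } for a nonzero finitely
generated module over a Noetherian local ring. -/
theorem depth_le_mdepth (R : Type*) [CommRing R] [IsNoetherianRing R] [IsLocalRing R]
    (M : Type*) [AddCommGroup M] [Module R M] [Module.Finite R M] [Nontrivial M] :
    (localDepth R M : WithBot ℕ∞) ≤ mdepth R M := by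
  apply le_sInf
  rintro d ⟨p, hp, rfl⟩
  have hprime : p.IsPrime := hp.isPrime
  have hnt : Nontrivial (R ⧸ p) := Ideal.Quotient.nontrivial_iff.mpr hprime.ne_top
  obtain ⟨e, he⟩ : ∃ e : ℕ∞, ringKrullDim (R ⧸ p) = (e : WithBot ℕ∞) := by
    have h0 : (⊥ : WithBot ℕ∞) < ringKrullDim (R ⧸ p) :=
      lt_of_lt_of_le (WithBot.bot_lt_coe 0) (ringKrullDim_nonneg_of_nontrivial (R := R ⧸ p))
    exact (WithBot.ne_bot_iff_exists.mp h0.ne').imp fun e h => h.symm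
  rw [he, localDepth, idealDepth, WithBot.coe_le_coe]
  apply sSup_le
  rintro n ⟨rs, rfl, hmem, hregs⟩
  obtain ⟨c, hc1, hc2⟩ := exists_ltSeries_of_isWeaklyRegular rs M hmem
    hregs.toIsWeaklyRegular p hp
  have := length_le_ringKrullDim_quotient c hc1
  rw [hc2, he] at this
  exact_mod_cast this
end

section
/- In the line graph L_n (the path graph on vertices 1,...,n with edges {j, j+1} for 1 ≤ j ≤ n−1), every minimal vertex cover has cardinality at most 2n/3 when n ≡ 0 (mod 3); i.e., no minimal vertex cover contains three consecutive vertices, and the maximum cardinality of a minimal vertex cover is 2n/3. -/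
open SimpleGraph Finset

/-- A vertex cover of a graph: a set of vertices meeting every edge. -/
def IsVertexCover {V : Type*} (G : SimpleGraph V) (C : Finset V) : Prop :=
  ∀ ⦃u v : V⦄, G.Adj u v → u ∈ C ∨ v ∈ C

/-- A minimal vertex cover: a vertex cover no proper subset of which is a vertex cover. -/
def IsMinimalVertexCover {V : Type*} (G : SimpleGraph V) (C : Finset V) : Prop :=
  _root_.IsVertexCover G C ∧ ∀ D ⊂ C, ¬ _root_.IsVertexCover G D

lemma no_three_consec {n : ℕ} (C : Finset (Fin n))
    (hC : IsMinimalVertexCover (pathGraph n) C)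
    (a b c : Fin n) (hb : (b : ℕ) = (a : ℕ) + 1) (hc : (c : ℕ) = (a : ℕ) + 2) :
    ¬ (a ∈ C ∧ b ∈ C ∧ c ∈ C) := by
  rintro ⟨ha, hbm, hcm⟩
  apply hC.2 (C.erase b) (Finset.erase_ssubset hbm)
  intro u v huv
  rw [pathGraph_adj] at huv
  by_cases hub : u = b
  · subst hub
    right
    have hv : v = a ∨ v = c := by
      rcases huv with h | h
      · right; exact Fin.ext (by omega)
      · left; exact Fin.ext (by omega)
    rcases hv with rfl | rfl
    · exact Finset.mem_erase.2 ⟨by intro h; rw [h] at hb; omega, ha⟩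
    · exact Finset.mem_erase.2 ⟨by intro h; rw [h] at hc; omega, hcm⟩
  · by_cases hvb : v = b
    · subst hvb
      left
      have hu : u = a ∨ u = c := by
        rcases huv with h | h
        · left; exact Fin.ext (by omega)
        · right; exact Fin.ext (by omega)
      rcases hu with rfl | rfl
      · exact Finset.mem_erase.2 ⟨by intro h; rw [h] at hb; omega, ha⟩
      · exact Finset.mem_erase.2 ⟨by intro h; rw [h] at hc; omega, hcm⟩
    · rcases hC.1 (pathGraph_adj.2 huv) with h | h
      · exact Or.inl (Finset.mem_erase.2 ⟨hub, h⟩)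
      · exact Or.inr (Finset.mem_erase.2 ⟨hvb, h⟩)

lemma cover_card_le {n : ℕ} (h3 : n % 3 = 0) (C : Finset (Fin n))
    (hC : IsMinimalVertexCover (pathGraph n) C) : C.card ≤ 2 * n / 3 := by
  rw [Finset.card_eq_sum_card_fiberwise (f := fun v : Fin n => (v : ℕ) / 3)
    (t := Finset.range (n / 3)) (fun x _ => Finset.mem_range.2 (show (x:ℕ)/3 < n/3 by have := x.isLt; omega))]
  have hsum : ∑ k ∈ Finset.range (n/3), (C.filter (fun v : Fin n => (v:ℕ)/3 = k)).card
      ≤ ∑ _k ∈ Finset.range (n/3), 2 := by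
    apply Finset.sum_le_sum
    intro k hk
    have hk' : k < n / 3 := Finset.mem_range.1 hk
    by_contra hcard
    push_neg at hcard
    have h1 : 3 * k + 2 < n := by omega
    set a : Fin n := ⟨3*k, by omega⟩ with ha_def
    set b : Fin n := ⟨3*k+1, by omega⟩ with hb_def
    set c : Fin n := ⟨3*k+2, by omega⟩ with hc_def
    have hsub : C.filter (fun v : Fin n => (v:ℕ)/3 = k) ⊆ {a, b, c} := by
      intro x hx
      simp only [Finset.mem_filter] at hx
      simp only [Finset.mem_insert, Finset.mem_singleton]
      have hx3 : (x:ℕ) = 3*k ∨ (x:ℕ) = 3*k+1 ∨ (x:ℕ) = 3*k+2 := by omega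
      rcases hx3 with h | h | h
      · exact Or.inl (Fin.ext h)
      · exact Or.inr (Or.inl (Fin.ext h))
      · exact Or.inr (Or.inr (Fin.ext h))
    have hcard3 : ({a, b, c} : Finset (Fin n)).card ≤ 3 := by
      apply le_trans (Finset.card_insert_le _ _)
      have := Finset.card_insert_le b ({c} : Finset (Fin n))
      simp only [Finset.card_singleton] at this
      omega
    have heq : C.filter (fun v : Fin n => (v:ℕ)/3 = k) = {a, b, c} :=
      Finset.eq_of_subset_of_card_le hsub (by omega)
    have haC : a ∈ C := Finset.filter_subset _ C (by rw [heq]; simp)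
    have hbC : b ∈ C := Finset.filter_subset _ C (by rw [heq]; simp)
    have hcC : c ∈ C := Finset.filter_subset _ C (by rw [heq]; simp)
    exact no_three_consec C hC a b c rfl rfl ⟨haC, hbC, hcC⟩
  have h2 : ∑ _k ∈ Finset.range (n/3), 2 = 2 * (n/3) := by
    rw [Finset.sum_const, Finset.card_range]; ring
  omega

lemma filter_range_card : ∀ m : ℕ,
    ((Finset.range (3*m)).filter (fun v => ¬ v % 3 = 1)).card = 2*m := by
  intro m
  induction m with
  | zero => simp
  | succ m ih =>
    have h : 3*(m+1) = 3*m+1+1+1 := by ring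
    rw [h, Finset.range_add_one, Finset.filter_insert, Finset.range_add_one,
      Finset.filter_insert, Finset.range_add_one, Finset.filter_insert,
      if_pos (show ¬(3*m+1+1) % 3 = 1 by omega),
      if_neg (show ¬¬(3*m+1) % 3 = 1 by simp only [not_not]; omega),
      if_pos (show ¬(3*m) % 3 = 1 by omega),
      Finset.card_insert_of_notMem (by
        simp only [Finset.mem_insert, Finset.mem_filter, Finset.mem_range]
        omega),
      Finset.card_insert_of_notMem (by
        simp only [Finset.mem_filter, Finset.mem_range]
        omega), ih]
    ring

lemma witness_card {n : ℕ} (h3 : n % 3 = 0) :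
    ((Finset.univ : Finset (Fin n)).filter (fun v : Fin n => ¬ (v:ℕ) % 3 = 1)).card = 2 * (n/3) := by
  rw [Finset.card_filter]
  rw [Fin.sum_univ_eq_sum_range (fun i => if ¬ i % 3 = 1 then 1 else 0)]
  rw [← Finset.card_filter]
  conv_lhs => rw [show n = 3*(n/3) by omega]
  exact filter_range_card (n/3)

/-- for n ≡ 0 (mod 3), no minimal vertex cover of the path graph Lₙ
contains three consecutive vertices, every minimal vertex cover has cardinality
at most 2n/3, and the maximum cardinality of a minimal vertex cover is 2n/3.
(Vertices are 0-indexed.) -/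
theorem path_minimal_vertex_cover_card (n : ℕ) (h3 : n % 3 = 0) (hn : 3 ≤ n) :
    (∀ C : Finset (Fin n), IsMinimalVertexCover (pathGraph n) C →
      ∀ a b c : Fin n, (b : ℕ) = (a : ℕ) + 1 → (c : ℕ) = (a : ℕ) + 2 →
        ¬ (a ∈ C ∧ b ∈ C ∧ c ∈ C)) ∧
    (∀ C : Finset (Fin n), IsMinimalVertexCover (pathGraph n) C → C.card ≤ 2 * n / 3) ∧
    IsGreatest {k | ∃ C : Finset (Fin n),
      IsMinimalVertexCover (pathGraph n) C ∧ C.card = k} (2 * n / 3) := by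
  refine ⟨fun C hC => no_three_consec C hC, fun C hC => cover_card_le h3 C hC, ?_, ?_⟩
  · refine ⟨Finset.univ.filter (fun v : Fin n => ¬ (v:ℕ) % 3 = 1), ⟨?_, ?_⟩, ?_⟩
    · intro u v huv
      rw [pathGraph_adj] at huv
      simp only [Finset.mem_filter, Finset.mem_univ, true_and]
      omega
    · intro D hD hDcov
      obtain ⟨x, hxC, hxD⟩ := Finset.exists_of_ssubset hD
      simp only [Finset.mem_filter, Finset.mem_univ, true_and] at hxC
      rcases (show (x:ℕ) % 3 = 0 ∨ (x:ℕ) % 3 = 2 by omega) with h0 | h2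
      · have hy : (x:ℕ) + 1 < n := by have := x.isLt; omega
        have hadj : (pathGraph n).Adj x ⟨(x:ℕ)+1, hy⟩ := pathGraph_adj.2 (Or.inl rfl)
        rcases hDcov hadj with h | h
        · exact hxD h
        · have := hD.subset h
          simp only [Finset.mem_filter, Finset.mem_univ, true_and] at this
          omega
      · have hx2 : 2 ≤ (x:ℕ) := by omega
        have hy : (x:ℕ) - 1 < n := by have := x.isLt; omega
        have hadj : (pathGraph n).Adj ⟨(x:ℕ)-1, hy⟩ x := pathGraph_adj.2 (Or.inl (by simp; omega))
        rcases hDcov hadj with h | h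
        · have := hD.subset h
          simp only [Finset.mem_filter, Finset.mem_univ, true_and] at this
          omega
        · exact hxD h
    · rw [witness_card h3]; omega
  · rintro k ⟨C, hC, rfl⟩
    exact cover_card_le h3 C hC
end

section
/- For n ≡ 0 (mod 3), the set C = {1, 3, 4, 6, 7, ..., n−3, n−2, n} (i.e., all i in {1,...,n} with i mod 3 ≠ 2) is a minimal vertex cover of the path graph L_n of cardinality 2n/3. -/
open SimpleGraph Finset

lemma aux_count (m : ℕ) : ((Finset.range (3*m)).filter (fun i => i % 3 ≠ 1)).card = 2*m := by
  induction m with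
  | zero => simp
  | succ k ih =>
    have h1 : 3*(k+1) = (3*k) + 1 + 1 + 1 := by ring
    rw [h1, Finset.range_add_one, Finset.range_add_one, Finset.range_add_one,
        Finset.filter_insert, Finset.filter_insert, Finset.filter_insert]
    rw [if_pos (by omega), if_neg (by omega), if_pos (by omega)]
    rw [Finset.card_insert_of_notMem (by simp only [Finset.mem_insert, Finset.mem_filter, Finset.mem_range]; omega),
        Finset.card_insert_of_notMem (by simp), ih]
    ring

/-- for n ≡ 0 (mod 3), the set C = {1,3,4,6,7,…,n−3,n−2,n} (1-indexed),
i.e. with 0-indexed vertices the set of i with i % 3 ≠ 1, is a minimal vertex cover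
of the path graph Lₙ of cardinality 2n/3. -/
theorem path_special_minimal_vertex_cover (n : ℕ) (h3 : n % 3 = 0) (hn : 3 ≤ n) :
    IsMinimalVertexCover (pathGraph n)
      (Finset.univ.filter (fun i : Fin n => (i : ℕ) % 3 ≠ 1)) ∧
    (Finset.univ.filter (fun i : Fin n => (i : ℕ) % 3 ≠ 1)).card = 2 * n / 3 := by
  set C := Finset.univ.filter (fun i : Fin n => (i : ℕ) % 3 ≠ 1) with hC
  have memC : ∀ i : Fin n, i ∈ C ↔ (i : ℕ) % 3 ≠ 1 := by
    intro i; simp [hC]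
  refine ⟨⟨?_, ?_⟩, ?_⟩
  · intro u v huv
    rw [pathGraph_adj] at huv
    rw [memC, memC]
    omega
  · intro D hD hDcov
    obtain ⟨x, hxC, hxD⟩ := Finset.exists_of_ssubset hD
    rw [memC] at hxC
    rcases (by omega : (x:ℕ) % 3 = 0 ∨ (x:ℕ) % 3 = 2) with h0 | h2
    · -- edge (x, x+1), x+1 % 3 = 1
      have hx1 : (x : ℕ) + 1 < n := by
        have := x.isLt; omega
      have hadj : (pathGraph n).Adj x ⟨(x:ℕ)+1, hx1⟩ := by
        rw [pathGraph_adj]; left; rfl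
      rcases hDcov hadj with h | h
      · exact hxD h
      · have := hD.subset h
        rw [memC] at this
        simp at this
        omega
    · -- edge (x-1, x), x-1 % 3 = 1
      have hx1 : (x : ℕ) - 1 < n := by
        have := x.isLt; omega
      have hadj : (pathGraph n).Adj ⟨(x:ℕ)-1, hx1⟩ x := by
        rw [pathGraph_adj]; left; simp; omega
      rcases hDcov hadj with h | h
      · have := hD.subset h
        rw [memC] at this
        simp at this
        omega
      · exact hxD h
  · have : C.card = ((Finset.range n).filter (fun i => i % 3 ≠ 1)).card := by
      rw [hC, ← Nat.Iio_eq_range, ← Fin.map_valEmbedding_univ, Finset.filter_map,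
        Finset.card_map]
      rfl
    obtain ⟨m, hm⟩ : ∃ m, n = 3*m := ⟨n/3, by omega⟩
    rw [this, hm, aux_count]
    omega
end

section
/- For n ≡ 1 (mod 3), the maximum cardinality of a minimal vertex cover of the path graph L_n equals 2(n−1)/3, attained by the set C = {2, 3, 5, 6, ..., n−2, n−1}. -/
open SimpleGraph Finset

/-- In a minimal vertex cover, every vertex has a neighbor outside the cover. -/
lemma minimal_private_neighbor {V : Type*} [DecidableEq V] {G : SimpleGraph V}
    {C : Finset V} (h : IsMinimalVertexCover G C) {x : V} (hx : x ∈ C)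
    (hall : ∀ y, G.Adj x y → y ∈ C) : False := by
  apply h.2 (C.erase x) (Finset.erase_ssubset hx)
  intro u v huv
  rcases h.1 huv with hu | hv
  · by_cases hux : u = x
    · subst hux
      exact Or.inr (Finset.mem_erase.2 ⟨huv.ne', hall v huv⟩)
    · exact Or.inl (Finset.mem_erase.2 ⟨hux, hu⟩)
  · by_cases hvx : v = x
    · subst hvx
      exact Or.inl (Finset.mem_erase.2 ⟨huv.ne, hall u huv.symm⟩)
    · exact Or.inr (Finset.mem_erase.2 ⟨hvx, hv⟩)

lemma filter_mod3_range_card (m : ℕ) :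
    ((Finset.range (3 * m + 1)).filter (fun i => ¬ i % 3 = 0)).card = 2 * m := by
  induction m with
  | zero => rfl
  | succ m ih =>
    have h1 : 3 * (m + 1) + 1 = ((3 * m + 1) + 1) + 1 + 1 := by ring
    have hne : ¬ ¬ ((3 * m + 1) + 1 + 1) % 3 = 0 := by omega
    have hp1 : ¬ ((3 * m + 1) + 1) % 3 = 0 := by omega
    have hp2 : ¬ (3 * m + 1) % 3 = 0 := by omega
    have hmem1 : (3 * m + 1) + 1 ∉
        insert (3 * m + 1) ((Finset.range (3 * m + 1)).filter
          (fun i => ¬ i % 3 = 0)) := by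
      simp only [Finset.mem_insert, Finset.mem_filter, Finset.mem_range]
      omega
    have hmem2 : (3 * m + 1) ∉
        (Finset.range (3 * m + 1)).filter (fun i => ¬ i % 3 = 0) := by
      simp only [Finset.mem_filter, Finset.mem_range]
      omega
    rw [h1, Finset.range_add_one, Finset.filter_insert, if_neg hne,
      Finset.range_add_one, Finset.filter_insert, if_pos hp1,
      Finset.range_add_one, Finset.filter_insert, if_pos hp2,
      Finset.card_insert_of_notMem hmem1,
      Finset.card_insert_of_notMem hmem2, ih]
    ring

lemma card_filter_fin (n : ℕ) :
    (Finset.univ.filter (fun i : Fin n => (i : ℕ) % 3 ≠ 0)).card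
      = ((Finset.range n).filter (fun i => ¬ i % 3 = 0)).card := by
  refine Finset.card_bij (fun i _ => (i : ℕ)) ?_ ?_ ?_
  · intro a ha
    simp only [Finset.mem_filter, Finset.mem_univ, true_and] at ha
    simp only [Finset.mem_filter, Finset.mem_range]
    exact ⟨a.isLt, ha⟩
  · intro a _ b _ h
    exact Fin.val_injective h
  · intro b hb
    simp only [Finset.mem_filter, Finset.mem_range] at hb
    refine ⟨⟨b, hb.1⟩, ?_, rfl⟩
    simp only [Finset.mem_filter, Finset.mem_univ, true_and]
    exact hb.2

/-- for n ≡ 1 (mod 3), the maximum cardinality of a minimal vertex cover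
of the path graph Lₙ equals 2(n−1)/3, attained by C = {2,3,5,6,…,n−2,n−1} (1-indexed),
i.e. with 0-indexed vertices the set of i with i % 3 ≠ 0. -/
theorem path_max_minimal_vertex_cover_one_mod_three (n : ℕ) (h3 : n % 3 = 1) (hn : 4 ≤ n) :
    IsGreatest {k | ∃ C : Finset (Fin n),
      IsMinimalVertexCover (pathGraph n) C ∧ C.card = k} (2 * (n - 1) / 3) ∧
    IsMinimalVertexCover (pathGraph n)
      (Finset.univ.filter (fun i : Fin n => (i : ℕ) % 3 ≠ 0)) ∧
    (Finset.univ.filter (fun i : Fin n => (i : ℕ) % 3 ≠ 0)).card = 2 * (n - 1) / 3 := by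
  obtain ⟨m, rfl⟩ : ∃ m, n = 3 * m + 1 := ⟨(n - 1) / 3, by omega⟩
  have hm : 1 ≤ m := by omega
  set n := 3 * m + 1 with hn_def
  have hval : 2 * (n - 1) / 3 = 2 * m := by omega
  -- the specific set
  set C0 : Finset (Fin n) := Finset.univ.filter (fun i : Fin n => (i : ℕ) % 3 ≠ 0) with hC0
  have hC0card : C0.card = 2 * m := by
    rw [hC0, card_filter_fin, filter_mod3_range_card]
  -- C0 is a vertex cover
  have hcover : _root_.IsVertexCover (pathGraph n) C0 := by
    intro u v huv
    rw [pathGraph_adj] at huv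
    simp only [hC0, Finset.mem_filter, Finset.mem_univ, true_and]
    omega
  -- C0 is a minimal vertex cover
  have hmin : IsMinimalVertexCover (pathGraph n) C0 := by
    refine ⟨hcover, ?_⟩
    intro D hD hDcov
    obtain ⟨x, hxC, hxD⟩ := Finset.exists_of_ssubset hD
    have hx3 : (x : ℕ) % 3 ≠ 0 := by
      simpa [hC0] using hxC
    have hDsub : D ⊆ C0 := hD.subset
    rcases Nat.lt_or_ge ((x : ℕ) % 3) 2 with h1 | h2
    · -- x % 3 = 1 : edge (x-1, x) uncovered
      have hx1 : (x : ℕ) % 3 = 1 := by omega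
      have hpos : 1 ≤ (x : ℕ) := by omega
      set u : Fin n := ⟨(x : ℕ) - 1, by omega⟩ with hu
      have hadj : (pathGraph n).Adj u x := by
        rw [pathGraph_adj]; left; simp [hu]; omega
      rcases hDcov hadj with h | h
      · have := hDsub h
        simp only [hC0, Finset.mem_filter, Finset.mem_univ, true_and, hu] at this
        omega
      · exact hxD h
    · -- x % 3 = 2 : edge (x, x+1) uncovered
      have hx2 : (x : ℕ) % 3 = 2 := by omega
      have hlt : (x : ℕ) + 1 < n := by
        have := x.isLt; omega
      set v : Fin n := ⟨(x : ℕ) + 1, hlt⟩ with hv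
      have hadj : (pathGraph n).Adj x v := by
        rw [pathGraph_adj]; left; simp [hv]
      rcases hDcov hadj with h | h
      · exact hxD h
      · have := hDsub h
        simp only [hC0, Finset.mem_filter, Finset.mem_univ, true_and, hv] at this
        omega
  -- upper bound : any minimal vertex cover has card ≤ 2m
  have hub : ∀ C : Finset (Fin n), IsMinimalVertexCover (pathGraph n) C →
      C.card ≤ 2 * m := by
    intro C hC
    set Z : Finset (Fin n) := Finset.univ \ C with hZ
    have hZcard : Z.card = n - C.card := by
      rw [hZ, Finset.card_sdiff_of_subset (Finset.subset_univ C)]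
      simp
    have key : ∀ k ∈ Finset.range (m + 1), ∃ x ∈ Z, ((x : ℕ) + 1) / 3 = k := by
      intro k hk
      rw [Finset.mem_range] at hk
      have hmemZ : ∀ x : Fin n, x ∉ C → x ∈ Z := by
        intro x hx; simp [hZ, hx]
      rcases Nat.eq_zero_or_pos k with rfl | hk0
      · -- k = 0 : one of 0, 1 not in C
        set a : Fin n := ⟨0, by omega⟩ with ha
        set b : Fin n := ⟨1, by omega⟩ with hb
        by_cases haC : a ∈ C
        · by_cases hbC : b ∈ C
          · exfalso
            apply minimal_private_neighbor hC haC
            intro y hy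
            rw [pathGraph_adj] at hy
            have : y = b := by
              apply Fin.val_injective
              simp only [ha, hb] at hy ⊢
              omega
            rwa [this]
          · exact ⟨b, hmemZ b hbC, by simp [hb]⟩
        · exact ⟨a, hmemZ a haC, by simp [ha]⟩
      · rcases Nat.lt_or_ge k m with hkm | hkm
        · -- 1 ≤ k ≤ m - 1 : one of 3k-1, 3k, 3k+1 not in C
          set a : Fin n := ⟨3 * k - 1, by omega⟩ with ha
          set b : Fin n := ⟨3 * k, by omega⟩ with hb
          set c : Fin n := ⟨3 * k + 1, by omega⟩ with hc
          by_cases haC : a ∈ C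
          · by_cases hbC : b ∈ C
            · by_cases hcC : c ∈ C
              · exfalso
                apply minimal_private_neighbor hC hbC
                intro y hy
                rw [pathGraph_adj] at hy
                simp only [hb] at hy
                rcases hy with hy | hy
                · have : y = c := by apply Fin.val_injective; simp [hc]; omega
                  rwa [this]
                · have : y = a := by apply Fin.val_injective; simp [ha]; omega
                  rwa [this]
              · exact ⟨c, hmemZ c hcC, by simp [hc]; omega⟩
            · exact ⟨b, hmemZ b hbC, by simp [hb]; omega⟩
          · exact ⟨a, hmemZ a haC, by simp [ha]; omega⟩
        · -- k = m : one of 3m-1, 3m not in C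
          have hkm' : k = m := by omega
          subst hkm'
          set a : Fin n := ⟨3 * k - 1, by omega⟩ with ha
          set b : Fin n := ⟨3 * k, by omega⟩ with hb
          by_cases hbC : b ∈ C
          · by_cases haC : a ∈ C
            · exfalso
              apply minimal_private_neighbor hC hbC
              intro y hy
              rw [pathGraph_adj] at hy
              simp only [hb] at hy
              have hylt := y.isLt
              have : y = a := by apply Fin.val_injective; simp [ha]; omega
              rwa [this]
            · exact ⟨a, hmemZ a haC, by simp [ha]; omega⟩
          · exact ⟨b, hmemZ b hbC, by simp [hb]; omega⟩
    have hsurj : Set.SurjOn (fun x : Fin n => ((x : ℕ) + 1) / 3)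
        (Z : Set (Fin n)) ((Finset.range (m + 1)) : Set ℕ) := by
      intro k hk
      obtain ⟨x, hxZ, hx⟩ := key k (by simpa using hk)
      exact ⟨x, by simpa using hxZ, hx⟩
    have hcard := Finset.card_le_card_of_surjOn _ hsurj
    rw [Finset.card_range] at hcard
    omega
  refine ⟨⟨⟨C0, hmin, by rw [hC0card, hval]⟩, ?_⟩, hmin, by rw [hC0card, hval]⟩
  rintro k ⟨C, hC, rfl⟩
  rw [hval]
  exact hub C hC
end

section
/- For n ≡ 2 (mod 3), the maximum cardinality of a minimal vertex cover of the path graph L_n equals (2n−1)/3, attained by the set C = {2, 3, 5, 6, ..., n−3, n−2, n}. -/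
open SimpleGraph Finset

/-- counting lemma for multiples of 3 in a range -/
lemma range_filter_mod3 (k : ℕ) :
    ((Finset.range (3*k)).filter (fun x => x % 3 ≠ 0)).card = 2*k := by
  induction k with
  | zero => simp
  | succ k ih =>
    have h : 3*(k+1) = (3*k+1)+1+1 := by ring
    rw [h, Finset.range_add_one, Finset.range_add_one, Finset.range_add_one,
        Finset.filter_insert, Finset.filter_insert, Finset.filter_insert]
    have h1 : (3*k+1+1) % 3 ≠ 0 := by omega
    have h2 : (3*k+1) % 3 ≠ 0 := by omega
    have h0 : ¬ (3*k) % 3 ≠ 0 := by omega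
    rw [if_pos h1, if_pos h2, if_neg h0]
    rw [Finset.card_insert_of_notMem, Finset.card_insert_of_notMem, ih]
    · ring
    · intro hmem; have := Finset.mem_range.mp (Finset.mem_filter.mp hmem).1; omega
    · intro hmem
      rcases Finset.mem_insert.mp hmem with h | h
      · omega
      · have := Finset.mem_range.mp (Finset.mem_filter.mp h).1; omega

/-- upper bound counting lemma -/
lemma bound_aux (m : ℕ) (S : Finset ℕ) (hsub : ∀ x ∈ S, x < 3*m+2)
    (h01 : ¬(0 ∈ S ∧ 1 ∈ S))
    (hthree : ∀ v, ¬(v ∈ S ∧ v+1 ∈ S ∧ v+2 ∈ S)) : S.card ≤ 2*m+1 := by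
  induction m generalizing S with
  | zero =>
    rw [Finset.card_le_one]
    intro a ha b hb
    have ha' := hsub a ha
    have hb' := hsub b hb
    by_contra hne
    have : (a = 0 ∧ b = 1) ∨ (a = 1 ∧ b = 0) := by omega
    rcases this with ⟨rfl, rfl⟩ | ⟨rfl, rfl⟩ <;> exact h01 ⟨by assumption, by assumption⟩
  | succ m ih =>
    set S₁ := S.filter (fun x => x < 3*m+2) with hS₁
    set S₂ := S.filter (fun x => ¬ x < 3*m+2) with hS₂
    have hcard : S₁.card + S₂.card = S.card := Finset.card_filter_add_card_filter_not _
    have h1 : S₁.card ≤ 2*m+1 := by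
      apply ih
      · intro x hx; exact (Finset.mem_filter.mp hx).2
      · intro ⟨h0, h1'⟩
        exact h01 ⟨(Finset.mem_filter.mp h0).1, (Finset.mem_filter.mp h1').1⟩
      · intro v ⟨ha, hb, hc⟩
        exact hthree v ⟨(Finset.mem_filter.mp ha).1, (Finset.mem_filter.mp hb).1,
          (Finset.mem_filter.mp hc).1⟩
    have hsub2 : S₂ ⊆ {3*m+2, 3*m+3, 3*m+4} := by
      intro x hx
      have h1' := (Finset.mem_filter.mp hx).2
      have h2' := hsub x (Finset.mem_filter.mp hx).1
      simp only [Finset.mem_insert, Finset.mem_singleton]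
      omega
    have h2 : S₂.card ≤ 2 := by
      by_contra h
      push_neg at h
      have htriple : ({3*m+2, 3*m+3, 3*m+4} : Finset ℕ).card = 3 := by
        rw [Finset.card_insert_of_notMem (by simp),
            Finset.card_insert_of_notMem (by simp), Finset.card_singleton]
      have heq := Finset.eq_of_subset_of_card_le hsub2 (by omega)
      have ha : 3*m+2 ∈ S₂ := by rw [heq]; simp
      have hb : 3*m+3 ∈ S₂ := by rw [heq]; simp
      have hc : 3*m+4 ∈ S₂ := by rw [heq]; simp
      exact hthree (3*m+2) ⟨(Finset.mem_filter.mp ha).1,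
        (Finset.mem_filter.mp hb).1, (Finset.mem_filter.mp hc).1⟩
    omega

/-- erasing a vertex whose neighbors are all in the cover keeps it a cover -/
lemma erase_cover {n : ℕ} (C : Finset (Fin n)) (hC : _root_.IsVertexCover (pathGraph n) C)
    (b : Fin n)
    (hlo : ∀ a : Fin n, (a : ℕ) + 1 = (b : ℕ) → a ∈ C)
    (hhi : ∀ c : Fin n, (b : ℕ) + 1 = (c : ℕ) → c ∈ C) :
    _root_.IsVertexCover (pathGraph n) (C.erase b) := by
  intro u v hadj
  have hadj' := pathGraph_adj.mp hadj
  rcases hC hadj with hu | hv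
  · by_cases hub : u = b
    · subst hub
      rcases hadj' with h | h
      · right; exact Finset.mem_erase.mpr ⟨fun he => by rw [he] at h; omega, hhi v h⟩
      · right; exact Finset.mem_erase.mpr ⟨fun he => by rw [he] at h; omega, hlo v h⟩
    · left; exact Finset.mem_erase.mpr ⟨hub, hu⟩
  · by_cases hvb : v = b
    · subst hvb
      rcases hadj' with h | h
      · left; exact Finset.mem_erase.mpr ⟨fun he => by rw [he] at h; omega, hlo u h⟩
      · left; exact Finset.mem_erase.mpr ⟨fun he => by rw [he] at h; omega, hhi u h⟩
    · right; exact Finset.mem_erase.mpr ⟨hvb, hv⟩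

/-- for n ≡ 2 (mod 3), the maximum cardinality of a minimal vertex cover
of the path graph Lₙ equals (2n−1)/3, attained by C = {2,3,5,6,…,n−3,n−2,n} (1-indexed),
i.e. with 0-indexed vertices the set of i with i % 3 ≠ 0. -/
theorem path_max_minimal_vertex_cover_two_mod_three (n : ℕ) (h3 : n % 3 = 2) (hn : 2 ≤ n) :
    IsGreatest {k | ∃ C : Finset (Fin n),
      IsMinimalVertexCover (pathGraph n) C ∧ C.card = k} ((2 * n - 1) / 3) ∧
    IsMinimalVertexCover (pathGraph n)
      (Finset.univ.filter (fun i : Fin n => (i : ℕ) % 3 ≠ 0)) ∧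
    (Finset.univ.filter (fun i : Fin n => (i : ℕ) % 3 ≠ 0)).card = (2 * n - 1) / 3 := by
  set m := n / 3 with hm
  have hnm : n = 3*m + 2 := by omega
  have hval : (2 * n - 1) / 3 = 2*m + 1 := by omega
  set T := Finset.univ.filter (fun i : Fin n => (i : ℕ) % 3 ≠ 0) with hT
  -- cardinality of T
  have hTcard : T.card = (2 * n - 1) / 3 := by
    have himg : T.image Fin.val = (Finset.range n).filter (fun x => x % 3 ≠ 0) := by
      ext x
      simp only [hT, Finset.mem_image, Finset.mem_filter, Finset.mem_univ, true_and,
        Finset.mem_range]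
      constructor
      · rintro ⟨i, hi, rfl⟩; exact ⟨i.isLt, hi⟩
      · rintro ⟨hx, hx3⟩; exact ⟨⟨x, hx⟩, hx3, rfl⟩
    have hcard1 : T.card = ((Finset.range n).filter (fun x => x % 3 ≠ 0)).card := by
      rw [← himg, Finset.card_image_of_injective _ Fin.val_injective]
    have hrangesplit : (Finset.range n) = insert (3*m+1) (insert (3*m) (Finset.range (3*m))) := by
      rw [hnm]
      rw [show 3*m+2 = (3*m+1)+1 from rfl, Finset.range_add_one,
        show 3*m+1 = (3*m)+1 from rfl, Finset.range_add_one]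
    rw [hcard1, hrangesplit, Finset.filter_insert, Finset.filter_insert,
      if_pos (by omega : (3*m+1) % 3 ≠ 0), if_neg (by omega : ¬ (3*m) % 3 ≠ 0),
      Finset.card_insert_of_notMem (by
        intro hmem; have := Finset.mem_range.mp (Finset.mem_filter.mp hmem).1; omega),
      range_filter_mod3, hval]
  -- T is a minimal vertex cover
  have hTmin : IsMinimalVertexCover (pathGraph n) T := by
    constructor
    · intro u v hadj
      have hadj' := pathGraph_adj.mp hadj
      simp only [hT, Finset.mem_filter, Finset.mem_univ, true_and]
      omega
    · intro D hD hcovD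
      obtain ⟨x, hxT, hxD⟩ := Finset.exists_of_ssubset hD
      have hx3 : (x : ℕ) % 3 ≠ 0 := (Finset.mem_filter.mp hxT).2
      have hDT : D ⊆ T := hD.subset
      rcases (by omega : (x : ℕ) % 3 = 1 ∨ (x : ℕ) % 3 = 2) with h1 | h2
      · -- edge (x-1, x) uncovered
        have hx1 : 1 ≤ (x : ℕ) := by omega
        set a : Fin n := ⟨(x : ℕ) - 1, by omega⟩ with ha
        have hadj : (pathGraph n).Adj a x := pathGraph_adj.mpr (Or.inl (by simp [ha]; omega))
        rcases hcovD hadj with hmem | hmem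
        · have := (Finset.mem_filter.mp (hDT hmem)).2
          simp [ha] at this; omega
        · exact hxD hmem
      · -- edge (x, x+1) uncovered
        have hxlt : (x : ℕ) + 1 < n := by
          have := x.isLt; omega
        set b : Fin n := ⟨(x : ℕ) + 1, hxlt⟩ with hb
        have hadj : (pathGraph n).Adj x b := pathGraph_adj.mpr (Or.inl (by simp [hb]))
        rcases hcovD hadj with hmem | hmem
        · exact hxD hmem
        · have := (Finset.mem_filter.mp (hDT hmem)).2
          simp [hb] at this; omega
  refine ⟨⟨⟨T, hTmin, hTcard⟩, ?_⟩, hTmin, hTcard⟩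
  -- upper bound
  rintro k ⟨C, ⟨hCcov, hCmin⟩, rfl⟩
  rw [hval]
  set S := C.image Fin.val with hS
  have hScard : S.card = C.card := Finset.card_image_of_injective _ Fin.val_injective
  have hmemS : ∀ x (hx : x < n), x ∈ S ↔ (⟨x, hx⟩ : Fin n) ∈ C := by
    intro x hx
    simp only [hS, Finset.mem_image]
    constructor
    · rintro ⟨i, hi, rfl⟩; convert hi
    · intro h; exact ⟨⟨x, hx⟩, h, rfl⟩
  have hSlt : ∀ x ∈ S, x < n := by
    intro x hx; obtain ⟨i, _, rfl⟩ := Finset.mem_image.mp hx; exact i.isLt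
  rw [← hScard]
  apply bound_aux m S (fun x hx => hnm ▸ hSlt x hx)
  · -- not both 0 and 1 in S
    rintro ⟨h0, h1⟩
    have h0' := (hmemS 0 (by omega)).mp h0
    have h1' := (hmemS 1 (by omega)).mp h1
    apply hCmin (C.erase ⟨0, by omega⟩) (Finset.erase_ssubset h0')
    apply erase_cover C hCcov
    · intro a ha; simp at ha
    · intro c hc
      have : c = ⟨1, by omega⟩ := by apply Fin.ext; simpa using hc.symm
      rw [this]; exact h1'
  · -- no three consecutive in S
    rintro v ⟨ha, hb, hc⟩
    have hvn : v + 2 < n := hSlt _ hc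
    have ha' := (hmemS v (by omega)).mp ha
    have hb' := (hmemS (v+1) (by omega)).mp hb
    have hc' := (hmemS (v+2) (by omega)).mp hc
    apply hCmin (C.erase ⟨v+1, by omega⟩) (Finset.erase_ssubset hb')
    apply erase_cover C hCcov
    · intro a hadj
      have : a = ⟨v, by omega⟩ := by apply Fin.ext; simp at hadj ⊢; omega
      rw [this]; exact ha'
    · intro c hadj
      have : c = ⟨v+2, by omega⟩ := by apply Fin.ext; simp at hadj ⊢; omega
      rw [this]; exact hc'
end

section
/- For n ≡ 0 (mod 3) and n ≥ 3, the maximum cardinality of a minimal vertex cover of the cycle graph C_n equals 2n/3. -/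
open SimpleGraph Finset

private lemma cycle_adj_iff {n : ℕ} [NeZero n] (hn : 3 ≤ n) {u v : Fin n} :
    (cycleGraph n).Adj u v ↔ u = v + 1 ∨ v = u + 1 := by
  rw [cycleGraph_adj']
  have h1 : (1 : Fin n).val = 1 := by
    rw [Fin.val_one']; exact Nat.mod_eq_of_lt (by omega)
  constructor
  · rintro (h | h)
    · left
      have h2 : u - v = 1 := Fin.ext (by rw [h1]; exact h)
      exact sub_eq_iff_eq_add'.mp h2
    · right
      have h2 : v - u = 1 := Fin.ext (by rw [h1]; exact h)
      exact sub_eq_iff_eq_add'.mp h2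
  · rintro (h | h)
    · left; rw [h, add_sub_cancel_left]; exact h1
    · right; rw [h, add_sub_cancel_left]; exact h1

private lemma val_add_one_mod3 {n : ℕ} [NeZero n] (h3 : n % 3 = 0) (hn : 3 ≤ n) (u : Fin n) :
    ((u + 1 : Fin n)).val % 3 = (u.val + 1) % 3 := by
  have h1 : (1 : Fin n).val = 1 := by rw [Fin.val_one']; exact Nat.mod_eq_of_lt (by omega)
  rw [Fin.val_add, h1, Nat.mod_mod_of_dvd _ (by omega : (3:ℕ) ∣ n)]

private lemma val_sub_one_mod3 {n : ℕ} [NeZero n] (h3 : n % 3 = 0) (hn : 3 ≤ n) (u : Fin n) :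
    ((u - 1 : Fin n)).val % 3 = (n - 1 + u.val) % 3 := by
  have h1 : (1 : Fin n).val = 1 := by rw [Fin.val_one']; exact Nat.mod_eq_of_lt (by omega)
  rw [Fin.sub_def, h1]
  simpa using Nat.mod_mod_of_dvd (n - 1 + u.val) (by omega : (3:ℕ) ∣ n)

/-- for n ≡ 0 (mod 3), n ≥ 3, the maximum cardinality of a minimal
vertex cover of the cycle graph Cₙ equals 2n/3. -/
theorem cycle_max_minimal_vertex_cover_zero_mod_three (n : ℕ) (h3 : n % 3 = 0) (hn : 3 ≤ n) :
    IsGreatest {k | ∃ C : Finset (Fin n),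
      IsMinimalVertexCover (cycleGraph n) C ∧ C.card = k} (2 * n / 3) := by
  haveI : NeZero n := ⟨by omega⟩
  have hdvd : (3:ℕ) ∣ n := by omega
  constructor
  · -- membership: construct a minimal vertex cover of size 2n/3
    refine ⟨Finset.univ.filter (fun i : Fin n => ¬ (i.val % 3 = 2)), ⟨?_, ?_⟩, ?_⟩
    · -- vertex cover
      intro u v hadj
      rcases (cycle_adj_iff hn).1 hadj with h | h
      · by_contra hc
        push_neg at hc
        simp only [mem_filter, mem_univ, true_and, not_not] at hc
        have h2 := val_add_one_mod3 h3 hn v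
        rw [← h] at h2
        omega
      · by_contra hc
        push_neg at hc
        simp only [mem_filter, mem_univ, true_and, not_not] at hc
        have h2 := val_add_one_mod3 h3 hn u
        rw [← h] at h2
        omega
    · -- minimality
      intro D hD hcov
      obtain ⟨x, hxC, hxD⟩ := Finset.exists_of_ssubset hD
      simp only [mem_filter, mem_univ, true_and] at hxC
      have hDsub := hD.subset
      have hx3 : x.val % 3 = 0 ∨ x.val % 3 = 1 := by omega
      rcases hx3 with hx0 | hx1
      · -- edge {x-1, x} is uncovered
        have hadj : (cycleGraph n).Adj (x - 1) x := by
          rw [cycle_adj_iff hn]; right; rw [sub_add_cancel]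
        rcases hcov hadj with h | h
        · have := hDsub h
          simp only [mem_filter, mem_univ, true_and] at this
          have h2 := val_sub_one_mod3 h3 hn x
          omega
        · exact hxD h
      · -- edge {x, x+1} is uncovered
        have hadj : (cycleGraph n).Adj x (x + 1) := by
          rw [cycle_adj_iff hn]; right; rfl
        rcases hcov hadj with h | h
        · exact hxD h
        · have := hDsub h
          simp only [mem_filter, mem_univ, true_and] at this
          have h2 := val_add_one_mod3 h3 hn x
          omega
    · -- cardinality
      have hpart := Finset.card_filter_add_card_filter_not
        (s := (Finset.univ : Finset (Fin n))) (p := fun i : Fin n => i.val % 3 = 2)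
      have hcard2 : (Finset.univ.filter (fun i : Fin n => i.val % 3 = 2)).card = n / 3 := by
        rw [← Finset.card_range (n / 3)]
        apply Finset.card_bij (fun (i : Fin n) _ => i.val / 3)
        · intro a ha
          simp only [mem_filter, mem_univ, true_and] at ha
          simp only [Finset.mem_range]
          have := a.isLt
          omega
        · intro a ha b hb hab
          simp only [mem_filter, mem_univ, true_and] at ha hb
          exact Fin.ext (by omega)
        · intro j hj
          simp only [Finset.mem_range] at hj
          refine ⟨⟨3 * j + 2, by omega⟩, ?_, by simp; omega⟩
          simp only [mem_filter, mem_univ, true_and]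
          omega
      have hcu : (Finset.univ : Finset (Fin n)).card = n := by simp
      omega
  · -- upper bound
    rintro k ⟨C, ⟨hcov, hmin⟩, rfl⟩
    classical
    set I : Finset (Fin n) := Finset.univ \ C with hI
    have hdom : ∀ v : Fin n, ∃ w ∈ I, v = w ∨ v = w + 1 ∨ v = w - 1 := by
      intro v
      by_cases hv : v ∈ C
      · have hnc := hmin (C.erase v) (Finset.erase_ssubset hv)
        simp only [_root_.IsVertexCover, not_forall] at hnc
        obtain ⟨a, b, hab, hnab⟩ := hnc
        push_neg at hnab
        obtain ⟨ha, hb⟩ := hnab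
        have hne : a ≠ b := hab.ne
        rcases hcov hab with hinC | hinC
        · have hav : a = v := by
            by_contra h
            exact ha (Finset.mem_erase.2 ⟨h, hinC⟩)
          have hbI : b ∈ I := by
            simp only [hI, Finset.mem_sdiff, mem_univ, true_and]
            intro hbC
            exact hb (Finset.mem_erase.2 ⟨by rw [← hav]; exact hne.symm, hbC⟩)
          refine ⟨b, hbI, ?_⟩
          subst hav
          rcases (cycle_adj_iff hn).1 hab with h | h
          · right; left; exact h
          · right; right; rw [h, add_sub_cancel_right]
        · have hbv : b = v := by
            by_contra h
            exact hb (Finset.mem_erase.2 ⟨h, hinC⟩)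
          have haI : a ∈ I := by
            simp only [hI, Finset.mem_sdiff, mem_univ, true_and]
            intro haC
            exact ha (Finset.mem_erase.2 ⟨by rw [← hbv]; exact hne, haC⟩)
          refine ⟨a, haI, ?_⟩
          subst hbv
          rcases (cycle_adj_iff hn).1 hab with h | h
          · right; right; rw [h, add_sub_cancel_right]
          · right; left; exact h
      · exact ⟨v, by simp [hI, hv], Or.inl rfl⟩
    have hsub : (Finset.univ : Finset (Fin n)) ⊆
        I.biUnion (fun w => {w, w + 1, w - 1}) := by
      intro v _
      obtain ⟨w, hw, hvw⟩ := hdom v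
      refine Finset.mem_biUnion.2 ⟨w, hw, ?_⟩
      simp only [Finset.mem_insert, Finset.mem_singleton]
      tauto
    have hcount : n ≤ 3 * I.card := by
      calc n = (Finset.univ : Finset (Fin n)).card := by simp
        _ ≤ (I.biUnion (fun w => {w, w + 1, w - 1})).card := Finset.card_le_card hsub
        _ ≤ ∑ w ∈ I, ({w, w + 1, w - 1} : Finset (Fin n)).card := Finset.card_biUnion_le
        _ ≤ ∑ _w ∈ I, 3 := Finset.sum_le_sum (fun w _ => by
              exact (Finset.card_insert_le _ _).trans (by
                have := Finset.card_insert_le (w + 1) ({w - 1} : Finset (Fin n)); rw [Finset.card_singleton] at this; omega))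
        _ = 3 * I.card := by rw [Finset.sum_const, smul_eq_mul, mul_comm]
    have hIcard : I.card = n - C.card := by
      rw [hI, Finset.card_sdiff_of_subset (Finset.subset_univ C)]
      simp
    have hCle : C.card ≤ n := by
      simpa using Finset.card_le_univ C
    omega
end

section
/- For n ≡ 1 (mod 3) and n ≥ 4, the maximum cardinality of a minimal vertex cover of the cycle graph C_n equals 2(n−1)/3. -/
open SimpleGraph Finset

private lemma mod_helper (n a b : ℕ) (hn : 2 ≤ n) (ha : a < n) (hb : b < n) :
    ((n - b) + a) % n = 1 ↔ (a = b + 1 ∨ (b = n - 1 ∧ a = 0)) := by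
  rcases lt_or_ge ((n - b) + a) n with h | h
  · rw [Nat.mod_eq_of_lt h]; omega
  · rw [Nat.mod_eq_sub_mod h,
      Nat.mod_eq_of_lt (show (n - b) + a - n < n by omega)]
    omega

private lemma cycle_adj_val {n : ℕ} (hn : 2 ≤ n) (u v : Fin n) :
    (cycleGraph n).Adj u v ↔
      (u.val + 1 = v.val ∨ v.val + 1 = u.val ∨ (u.val = 0 ∧ v.val + 1 = n) ∨
        (v.val = 0 ∧ u.val + 1 = n)) := by
  rw [cycleGraph_adj', Fin.sub_def, Fin.sub_def]
  simp only
  rw [mod_helper n u.val v.val hn u.isLt v.isLt, mod_helper n v.val u.val hn v.isLt u.isLt]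
  have := u.isLt
  have := v.isLt
  omega

/-- for n ≡ 1 (mod 3), n ≥ 4, the maximum cardinality of a minimal
vertex cover of the cycle graph Cₙ equals 2(n−1)/3. -/
theorem cycle_max_minimal_vertex_cover_one_mod_three (n : ℕ) (h3 : n % 3 = 1) (hn : 4 ≤ n) :
    IsGreatest {k | ∃ C : Finset (Fin n),
      IsMinimalVertexCover (cycleGraph n) C ∧ C.card = k} (2 * (n - 1) / 3) := by
  obtain ⟨m, rfl⟩ : ∃ m, n = 3 * m + 1 := ⟨n / 3, by omega⟩
  have hm : 1 ≤ m := by omega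
  have htarget : 2 * (3 * m + 1 - 1) / 3 = 2 * m := by omega
  rw [htarget]
  constructor
  · -- membership: explicit minimal vertex cover of size 2m
    refine ⟨univ.filter (fun v : Fin (3 * m + 1) => ¬ (v.val = 0 ∨ v.val % 3 = 2)),
      ⟨?_, ?_⟩, ?_⟩
    · -- vertex cover
      intro u v huv
      rw [cycle_adj_val (by omega)] at huv
      simp only [mem_filter, mem_univ, true_and]
      by_contra hc
      push_neg at hc
      obtain ⟨h1, h2⟩ := hc
      have hu := u.isLt
      have hv := v.isLt
      omega
    · -- minimality
      intro D hD hDcov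
      obtain ⟨v, hvC, hvD⟩ := exists_of_ssubset hD
      simp only [mem_filter, mem_univ, true_and] at hvC
      push_neg at hvC
      obtain ⟨hv0, hv2⟩ := hvC
      have hvlt := v.isLt
      have : ∃ w : Fin (3 * m + 1), (cycleGraph (3 * m + 1)).Adj v w ∧
          (w.val = 0 ∨ w.val % 3 = 2) := by
        rcases (show v.val % 3 = 0 ∨ v.val % 3 = 1 ∨ v.val % 3 = 2 by omega) with h | h | h
        · refine ⟨⟨v.val - 1, by omega⟩, ?_, Or.inr ?_⟩
          · rw [cycle_adj_val (by omega)]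
            show v.val + 1 = v.val - 1 ∨ (v.val - 1) + 1 = v.val ∨ _ ∨ _
            omega
          · show (v.val - 1) % 3 = 2
            omega
        · refine ⟨⟨v.val + 1, by omega⟩, ?_, Or.inr ?_⟩
          · rw [cycle_adj_val (by omega)]
            show v.val + 1 = v.val + 1 ∨ _ ∨ _ ∨ _
            omega
          · show (v.val + 1) % 3 = 2
            omega
        · omega
      obtain ⟨w, hadj, hwS⟩ := this
      rcases hDcov hadj with h | h
      · exact hvD h
      · have := hD.1 h
        simp only [mem_filter, mem_univ, true_and] at this
        exact this hwS
    · -- cardinality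
      have hcompl : (univ.filter
          (fun v : Fin (3 * m + 1) => (v.val = 0 ∨ v.val % 3 = 2))).card = m + 1 := by
        have himg : (univ.filter (fun v : Fin (3 * m + 1) => (v.val = 0 ∨ v.val % 3 = 2))) =
            insert ⟨0, by omega⟩
              ((range m).image
                (fun j => (⟨min (3 * j + 2) (3 * m), by omega⟩ : Fin (3 * m + 1)))) := by
          ext v
          simp only [mem_filter, mem_univ, true_and, mem_insert, mem_image, mem_range]
          constructor
          · rintro (h0 | h2)
            · exact Or.inl (Fin.ext h0)
            · refine Or.inr ⟨v.val / 3, by have := v.isLt; omega, Fin.ext ?_⟩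
              show min (3 * (v.val / 3) + 2) (3 * m) = v.val
              have := v.isLt
              omega
          · rintro (rfl | ⟨j, hj, rfl⟩)
            · left; rfl
            · right
              show (min (3 * j + 2) (3 * m)) % 3 = 2
              omega
        rw [himg, card_insert_of_notMem, card_image_of_injOn]
        · simp
        · intro a ha b hb hab
          simp only [mem_coe, mem_range] at ha hb
          rw [Fin.ext_iff] at hab
          simp only [Fin.val_mk] at hab
          omega
        · simp only [mem_image, mem_range, not_exists]
          rintro j ⟨hj, hje⟩
          rw [Fin.ext_iff] at hje
          simp only [Fin.val_mk] at hje
          omega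
      have := Finset.card_filter_add_card_filter_not
        (s := (univ : Finset (Fin (3 * m + 1))))
        (p := fun v : Fin (3 * m + 1) => (v.val = 0 ∨ v.val % 3 = 2))
      rw [card_univ, Fintype.card_fin] at this
      omega
  · -- upper bound
    rintro k ⟨C, ⟨hcov, hmin⟩, rfl⟩
    set S : Finset (Fin (3 * m + 1)) := univ \ C with hS
    have hScard : S.card = 3 * m + 1 - C.card := by
      rw [hS, card_sdiff_of_subset (subset_univ C), card_univ, Fintype.card_fin]
    have hCle : C.card ≤ 3 * m + 1 := by
      simpa using card_le_card (subset_univ C)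
    have hdom : ∀ v : Fin (3 * m + 1), ∃ s : Fin (3 * m + 1),
        s ∈ S ∧ (s = v ∨ (cycleGraph (3 * m + 1)).Adj v s) := by
      intro v
      by_cases hv : v ∈ C
      · have hsub : C.erase v ⊂ C := erase_ssubset hv
        have hne := hmin _ hsub
        simp only [_root_.IsVertexCover, not_forall] at hne
        obtain ⟨a, b, hab, hnab⟩ := hne
        push_neg at hnab
        obtain ⟨ha, hb⟩ := hnab
        rcases hcov hab with h | h
        · have hav : a = v := by
            by_contra hne'
            exact ha (mem_erase.mpr ⟨hne', h⟩)
          subst hav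
          have hbC : b ∉ C := fun hbC => hb (mem_erase.mpr ⟨fun hbv => by
            subst hbv; exact (cycleGraph _).loopless.irrefl _ hab, hbC⟩)
          exact ⟨b, by simp [hS, hbC], Or.inr hab⟩
        · have hbv : b = v := by
            by_contra hne'
            exact hb (mem_erase.mpr ⟨hne', h⟩)
          subst hbv
          have haC : a ∉ C := fun haC => ha (mem_erase.mpr ⟨fun hav => by
            subst hav; exact (cycleGraph _).loopless.irrefl _ hab, haC⟩)
          exact ⟨a, by simp [hS, haC], Or.inr hab.symm⟩
      · exact ⟨v, by simp [hS, hv], Or.inl rfl⟩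
    choose f hfS hf using hdom
    have hfiber : ∀ s ∈ S, (univ.filter (fun v => f v = s)).card ≤ 3 := by
      intro s _
      set A : Fin (3 * m + 1) := ⟨(s.val + 1) % (3 * m + 1), Nat.mod_lt _ (by omega)⟩ with hA
      set B : Fin (3 * m + 1) :=
        ⟨(s.val + 3 * m) % (3 * m + 1), Nat.mod_lt _ (by omega)⟩ with hB
      have hsub : (univ.filter (fun v => f v = s)) ⊆ {A, s, B} := by
        intro v hv
        simp only [mem_filter, mem_univ, true_and] at hv
        have hslt := s.isLt
        have hvlt := v.isLt
        simp only [mem_insert, mem_singleton]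
        rcases hf v with h | h
        · rw [hv] at h; right; left; exact h.symm
        · rw [hv, cycle_adj_val (by omega)] at h
          rcases h with h | h | h | h
          · -- v.val + 1 = s.val, so v = B
            right; right
            apply Fin.ext
            show v.val = (s.val + 3 * m) % (3 * m + 1)
            rw [Nat.mod_eq_sub_mod (by omega), Nat.mod_eq_of_lt (by omega)]
            omega
          · -- s.val + 1 = v.val, so v = A
            left
            apply Fin.ext
            show v.val = (s.val + 1) % (3 * m + 1)
            rw [Nat.mod_eq_of_lt (by omega)]
            omega
          · -- v.val = 0, s.val = 3m, so v = A
            left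
            apply Fin.ext
            show v.val = (s.val + 1) % (3 * m + 1)
            rw [show s.val + 1 = 3 * m + 1 by omega, Nat.mod_self]
            omega
          · -- s.val = 0, v.val = 3m, so v = B
            right; right
            apply Fin.ext
            show v.val = (s.val + 3 * m) % (3 * m + 1)
            rw [Nat.mod_eq_of_lt (by omega)]
            omega
      calc (univ.filter (fun v => f v = s)).card ≤ ({A, s, B} : Finset (Fin (3 * m + 1))).card :=
            card_le_card hsub
        _ ≤ 3 := by
            apply le_trans (card_insert_le _ _)
            have h1 := card_insert_le s ({B} : Finset (Fin (3 * m + 1)))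
            have h2 : ({B} : Finset (Fin (3 * m + 1))).card = 1 := card_singleton _
            omega
    have hcount : 3 * m + 1 ≤ 3 * S.card := by
      have := Finset.card_le_mul_card_image_of_maps_to (f := f) (s := univ) (t := S)
        (fun a _ => hfS a) 3 hfiber
      rwa [card_univ, Fintype.card_fin] at this
    omega
end

section
/- For n ≡ 2 (mod 3) and n ≥ 5, the maximum cardinality of a minimal vertex cover of the cycle graph C_n equals (2n−1)/3. -/
open SimpleGraph Finset

lemma adj_iff_aux {m : ℕ} {u v : Fin (m+2)} :
    (cycleGraph (m+2)).Adj u v ↔ u = v + 1 ∨ v = u + 1 := by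
  rw [cycleGraph_adj, sub_eq_iff_eq_add', sub_eq_iff_eq_add']

/-- in a minimal vertex cover, every vertex has a neighbor outside the cover -/
lemma no_three_aux {m : ℕ} {C : Finset (Fin (m+2))}
    (h : IsMinimalVertexCover (cycleGraph (m+2)) C) :
    ∀ v ∈ C, v - 1 ∉ C ∨ v + 1 ∉ C := by
  intro v hv
  by_contra hcon
  push_neg at hcon
  obtain ⟨h1, h2⟩ := hcon
  refine h.2 (C.erase v) (Finset.erase_ssubset hv) ?_
  intro a b hadj
  have hne : a ≠ b := hadj.ne
  rcases h.1 hadj with ha | hb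
  · by_cases hav : a = v
    · subst hav
      rcases adj_iff_aux.mp hadj with hb' | hb'
      · right
        have : b = a - 1 := by rw [hb']; open Fin.CommRing in ring
        subst this
        exact Finset.mem_erase.mpr ⟨fun hh => hne (by rw [hh]), h1⟩
      · right; subst hb'
        exact Finset.mem_erase.mpr ⟨fun hh => hne (by rw [hh]), h2⟩
    · exact Or.inl (Finset.mem_erase.mpr ⟨hav, ha⟩)
  · by_cases hbv : b = v
    · subst hbv
      rcases adj_iff_aux.mp hadj with ha' | ha'
      · left; subst ha'
        exact Finset.mem_erase.mpr ⟨fun hh => hne (by rw [hh]), h2⟩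
      · left
        have : a = b - 1 := by rw [ha']; open Fin.CommRing in ring
        subst this
        exact Finset.mem_erase.mpr ⟨fun hh => hne (by rw [hh]), h1⟩
    · exact Or.inr (Finset.mem_erase.mpr ⟨hbv, hb⟩)

lemma upper_aux {m : ℕ} {C : Finset (Fin (m+2))}
    (h : IsMinimalVertexCover (cycleGraph (m+2)) C) :
    3 * C.card ≤ 2 * (m+2) := by
  classical
  set f : Fin (m+2) → ℕ := fun i => if i ∈ C then 1 else 0 with hf
  have hshift : ∀ c : Fin (m+2), (∑ i : Fin (m+2), f (i + c)) = ∑ i : Fin (m+2), f i :=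
    fun c => Fintype.sum_equiv (Equiv.addRight c) _ _ (fun i => rfl)
  have hsum : ∑ i : Fin (m+2), f i = C.card := by
    rw [hf, Finset.sum_ite_mem, Finset.univ_inter, Finset.card_eq_sum_ones]
  have key : ∑ i : Fin (m+2), (f i + f (i + 1) + f (i + 2)) = 3 * C.card := by
    rw [Finset.sum_add_distrib, Finset.sum_add_distrib, hshift 1, hshift 2, hsum]
    ring
  have bound : ∀ i : Fin (m+2), f i + f (i + 1) + f (i + 2) ≤ 2 := by
    intro i
    by_cases hmem : i + 1 ∈ C
    · rcases no_three_aux h (i + 1) hmem with h' | h'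
      · have hi : i ∉ C := by simpa using h'
        have : i + 2 = (i + 1) + 1 := by open Fin.CommRing in ring
        simp [hf, hi]
        split_ifs <;> omega
      · have hi2 : i + 2 ∉ C := by
          have : i + 2 = (i + 1) + 1 := by open Fin.CommRing in ring
          rwa [this]
        simp [hf, hi2]
        split_ifs <;> omega
    · simp [hf, hmem]
      split_ifs <;> omega
  calc 3 * C.card = ∑ i : Fin (m+2), (f i + f (i + 1) + f (i + 2)) := key.symm
    _ ≤ ∑ _i : Fin (m+2), 2 := Finset.sum_le_sum (fun i _ => bound i)
    _ = 2 * (m+2) := by simp [Finset.sum_const, Nat.mul_comm]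

lemma count_aux : ∀ a : ℕ, ((Finset.range (3*a)).filter (fun i => i % 3 ≠ 2)).card = 2*a := by
  intro a
  induction a with
  | zero => simp
  | succ a ih =>
    have h1 : 3*(a+1) = (3*a) + 1 + 1 + 1 := by ring
    rw [h1, Finset.range_add_one, Finset.range_add_one, Finset.range_add_one,
        Finset.filter_insert, Finset.filter_insert, Finset.filter_insert]
    have c2 : ¬((3*a+1+1) % 3 ≠ 2) := by omega
    have c1 : (3*a+1) % 3 ≠ 2 := by omega
    have c0 : (3*a) % 3 ≠ 2 := by omega
    rw [if_neg c2, if_pos c1, if_pos c0,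
        Finset.card_insert_of_notMem (by simp),
        Finset.card_insert_of_notMem (by simp), ih]
    ring

/-- for n ≡ 2 (mod 3), n ≥ 5, the maximum cardinality of a minimal
vertex cover of the cycle graph Cₙ equals (2n−1)/3. -/
theorem cycle_max_minimal_vertex_cover_two_mod_three (n : ℕ) (h3 : n % 3 = 2) (hn : 5 ≤ n) :
    IsGreatest {k | ∃ C : Finset (Fin n),
      IsMinimalVertexCover (cycleGraph n) C ∧ C.card = k} ((2 * n - 1) / 3) := by
  obtain ⟨m, rfl⟩ : ∃ m, n = m + 2 := ⟨n - 2, by omega⟩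
  have hlt : ∀ x ∈ (Finset.range (m+2)).filter (fun i => i % 3 ≠ 2 ∧ i + 1 ≠ m + 2),
      x < m + 2 := fun x hx => Finset.mem_range.mp (Finset.mem_filter.mp hx).1
  set C : Finset (Fin (m+2)) := Finset.attachFin _ hlt with hC
  have hmemC : ∀ v : Fin (m+2), v ∈ C ↔ (v.val % 3 ≠ 2 ∧ v.val + 1 ≠ m + 2) := by
    intro v
    rw [hC, Finset.mem_attachFin]
    simp [Finset.mem_filter, v.isLt]
  have hsucc : ∀ v : Fin (m+2), (v + 1).val = if v.val = m + 1 then 0 else v.val + 1 := by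
    intro v
    rw [Fin.val_add_one v]
    simp [Fin.ext_iff]
  have hpred : ∀ v : Fin (m+2), (v - 1).val = if v.val = 0 then m + 1 else v.val - 1 := by
    intro v
    rw [Fin.coe_sub_one v]
    simp only [Fin.ext_iff, Fin.val_zero]
  have claim : ∀ u : Fin (m+2), u ∈ C ∨ u + 1 ∈ C := by
    intro u
    rw [hmemC, hmemC, hsucc u]
    have := u.isLt
    split_ifs with h <;> omega
  have hcov : _root_.IsVertexCover (cycleGraph (m+2)) C := by
    intro u v hadj
    rcases adj_iff_aux.mp hadj with h' | h'
    · subst h'; exact (claim v).symm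
    · subst h'; exact claim u
  have hmin : ∀ D ⊂ C, ¬ _root_.IsVertexCover (cycleGraph (m+2)) D := by
    intro D hD hcovD
    obtain ⟨v, hvC, hvD⟩ := Finset.exists_of_ssubset hD
    have hv := (hmemC v).mp hvC
    by_cases h0 : v.val % 3 = 1
    · have hw : v + 1 ∉ C := by
        rw [hmemC, hsucc v]
        have := v.isLt
        split_ifs with h <;> omega
      have hadj : (cycleGraph (m+2)).Adj v (v+1) := adj_iff_aux.mpr (Or.inr rfl)
      rcases hcovD hadj with h | h
      · exact hvD h
      · exact hw (hD.subset h)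
    · have hw : v - 1 ∉ C := by
        rw [hmemC, hpred v]
        have := v.isLt
        split_ifs with h <;> omega
      have hadj : (cycleGraph (m+2)).Adj v (v - 1) := by
        apply adj_iff_aux.mpr; left; rw [sub_add_cancel]
      rcases hcovD hadj with h | h
      · exact hvD h
      · exact hw (hD.subset h)
  have hcard : C.card = (2 * (m+2) - 1) / 3 := by
    rw [hC, Finset.card_attachFin]
    obtain ⟨a, hm⟩ : ∃ a, m = 3*a := ⟨m/3, by omega⟩
    subst hm
    have hset : (Finset.range (3*a+2)).filter (fun i => i % 3 ≠ 2 ∧ i + 1 ≠ 3*a + 2)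
        = insert (3*a) ((Finset.range (3*a)).filter (fun i => i % 3 ≠ 2)) := by
      ext x
      simp only [Finset.mem_filter, Finset.mem_range, Finset.mem_insert]
      omega
    rw [hset, Finset.card_insert_of_notMem (by simp), count_aux]
    omega
  constructor
  · exact ⟨C, ⟨hcov, hmin⟩, hcard⟩
  · rintro k ⟨D, hminD, rfl⟩
    have := upper_aux hminD
    omega
end

section
/- Let G be the graph C_n ∪ W(x_1), obtained from the cycle graph C_n by adding a new vertex n+1 and the edge {1, n+1}. If n ≡ 0 (mod 3), then the maximum cardinality of a minimal vertex cover of G equals (2n+3)/3. -/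
open SimpleGraph Finset

/-- The graph Cₙ ∪ W(x₁): the cycle on the vertices 0,…,n−1 of Fin (n+1),
together with a whisker edge joining vertex 0 to the new vertex n. -/
def whiskeredCycleGraph (n : ℕ) : SimpleGraph (Fin (n + 1)) :=
  SimpleGraph.fromRel (fun i j =>
    ((i : ℕ) + 1 = (j : ℕ) ∧ (j : ℕ) < n) ∨
    ((i : ℕ) = 0 ∧ (j : ℕ) = n - 1) ∨
    ((i : ℕ) = 0 ∧ (j : ℕ) = n))

open scoped Classical

lemma wadj {n : ℕ} {u v : Fin (n+1)} :
    (whiskeredCycleGraph n).Adj u v ↔ (u:ℕ) ≠ (v:ℕ) ∧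
      (((u:ℕ)+1 = (v:ℕ) ∧ (v:ℕ) < n) ∨ ((u:ℕ)=0 ∧ (v:ℕ)=n-1) ∨ ((u:ℕ)=0 ∧ (v:ℕ)=n) ∨
       ((v:ℕ)+1 = (u:ℕ) ∧ (u:ℕ) < n) ∨ ((v:ℕ)=0 ∧ (u:ℕ)=n-1) ∨ ((v:ℕ)=0 ∧ (u:ℕ)=n)) := by
  simp only [whiskeredCycleGraph, SimpleGraph.fromRel_adj, ne_eq, ← Fin.val_ne_iff]
  tauto

/-- The extremal minimal vertex cover: all vertices except multiples of 3 below n. -/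
def wCover (n : ℕ) : Finset (Fin (n+1)) :=
  univ.filter (fun v => (v:ℕ) = n ∨ (v:ℕ) % 3 ≠ 0)

lemma wCover_card (n : ℕ) (h3 : n % 3 = 0) (hn : 3 ≤ n) :
    (wCover n).card = (2*n+3)/3 := by
  have h1 : (univ.filter (fun v : Fin (n+1) => ¬((v:ℕ) = n ∨ (v:ℕ) % 3 ≠ 0))) =
      (range (n/3)).attach.image
        (fun i => (⟨3*i.1, by have := mem_range.mp i.2; omega⟩ : Fin (n+1))) := by
    ext v
    simp only [mem_filter, mem_univ, true_and, mem_image, Fin.ext_iff]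
    constructor
    · rintro h
      have hv := v.isLt
      exact ⟨⟨(v:ℕ)/3, mem_range.mpr (by omega)⟩, mem_attach _ _, by simp; omega⟩
    · rintro ⟨⟨i, hi⟩, -, h⟩
      have hv := v.isLt
      have hi' := mem_range.mp hi
      simp at h
      omega
  have h2 : (univ.filter (fun v : Fin (n+1) => ¬((v:ℕ) = n ∨ (v:ℕ) % 3 ≠ 0))).card = n/3 := by
    rw [h1, Finset.card_image_of_injective _ (fun a b hab => by
      have : 3*a.1 = 3*b.1 := by simpa [Fin.ext_iff] using hab
      exact Subtype.ext (by omega)), Finset.card_attach, Finset.card_range]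
  have h4 := Finset.card_filter_add_card_filter_not
    (s := (univ : Finset (Fin (n+1)))) (p := fun v => (v:ℕ) = n ∨ (v:ℕ) % 3 ≠ 0)
  simp only [Finset.card_univ, Fintype.card_fin] at h4
  unfold wCover
  omega

lemma wCover_minimal (n : ℕ) (h3 : n % 3 = 0) (hn : 3 ≤ n) :
    IsMinimalVertexCover (whiskeredCycleGraph n) (wCover n) := by
  constructor
  · intro u v huv
    rw [wadj] at huv
    simp only [wCover, mem_filter, mem_univ, true_and]
    by_contra hc
    push_neg at hc
    obtain ⟨⟨h1, h2⟩, h3', h4⟩ := hc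
    omega
  · intro D hD hcov
    obtain ⟨c, hcC, hcD⟩ := Finset.exists_of_ssubset hD
    have hcC' : (c:ℕ) = n ∨ (c:ℕ) % 3 ≠ 0 := by
      simpa [wCover] using hcC
    have hclt := c.isLt
    have : ∃ d : Fin (n+1), (whiskeredCycleGraph n).Adj c d ∧ d ∉ wCover n := by
      rcases hcC' with h | h
      · refine ⟨⟨0, by omega⟩, ?_, ?_⟩
        · rw [wadj]; simp only [Fin.val_mk, true_and]; omega
        · simp [wCover]; omega
      · rcases Nat.lt_or_ge (c:ℕ) n with hlt | hge
        · rcases Nat.lt_or_ge ((c:ℕ)+1) n with hlt2 | hge2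
          · by_cases hm : (c:ℕ) % 3 = 1
            · refine ⟨⟨(c:ℕ)-1, by omega⟩, ?_, ?_⟩
              · rw [wadj]; simp; omega
              · simp [wCover]; omega
            · refine ⟨⟨(c:ℕ)+1, by omega⟩, ?_, ?_⟩
              · rw [wadj]; simp; omega
              · simp [wCover]; omega
          · refine ⟨⟨0, by omega⟩, ?_, ?_⟩
            · rw [wadj]; simp only [Fin.val_mk, true_and]; omega
            · simp [wCover]; omega
        · omega
    obtain ⟨d, hadj, hdC⟩ := this
    have hdD : d ∉ D := fun h => hdC (hD.1 h)
    rcases hcov hadj with h | h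
    · exact hcD h
    · exact hdD h

/-- The closed neighborhood of a vertex. -/
noncomputable def wNb (n : ℕ) (d : Fin (n+1)) : Finset (Fin (n+1)) :=
  insert d (univ.filter (fun v => (whiskeredCycleGraph n).Adj d v))

lemma wNb_card {n : ℕ} (hn : 3 ≤ n) (d : Fin (n+1)) :
    (wNb n d).card ≤ if (d:ℕ) = 0 then 4 else 3 := by
  have hdlt := d.isLt
  by_cases hd : (d:ℕ) = 0
  · have hsub : wNb n d ⊆ {d, ⟨1, by omega⟩, ⟨n-1, by omega⟩, ⟨n, by omega⟩} := by
      intro x hx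
      simp only [wNb, mem_insert, mem_filter, mem_univ, true_and, wadj] at hx
      simp only [mem_insert, mem_singleton, Fin.ext_iff, Fin.val_mk]
      have hxlt := x.isLt
      omega
    simp only [hd, if_pos]
    refine le_trans (Finset.card_le_card hsub) ?_
    refine le_trans (Finset.card_insert_le _ _) (Nat.succ_le_succ ?_)
    refine le_trans (Finset.card_insert_le _ _) (Nat.succ_le_succ ?_)
    exact Finset.card_insert_le _ _
  · have hsub : wNb n d ⊆ {d, ⟨(d:ℕ)-1, by omega⟩,
        ⟨if (d:ℕ)+1 < n then (d:ℕ)+1 else 0, by split <;> omega⟩} := by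
      intro x hx
      simp only [wNb, mem_insert, mem_filter, mem_univ, true_and, wadj] at hx
      simp only [mem_insert, mem_singleton, Fin.ext_iff, Fin.val_mk]
      have hxlt := x.isLt
      split <;> omega
    simp only [hd, if_false]
    refine le_trans (Finset.card_le_card hsub) ?_
    refine le_trans (Finset.card_insert_le _ _) (Nat.succ_le_succ ?_)
    exact Finset.card_insert_le _ _

lemma wCover_upper (n : ℕ) (h3 : n % 3 = 0) (hn : 3 ≤ n) (C : Finset (Fin (n+1)))
    (hC : IsMinimalVertexCover (whiskeredCycleGraph n) C) : C.card ≤ (2*n+3)/3 := by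
  set G := whiskeredCycleGraph n with hG
  set D := (univ : Finset (Fin (n+1))) \ C with hDdef
  have hdom : ∀ v : Fin (n+1), ∃ d ∈ D, v = d ∨ G.Adj d v := by
    intro v
    by_cases hv : v ∈ C
    · have hss : C.erase v ⊂ C := Finset.erase_ssubset hv
      have hnc := hC.2 _ hss
      unfold _root_.IsVertexCover at hnc
      push_neg at hnc
      obtain ⟨u, w, huw, hu, hw⟩ := hnc
      have hu' : u ≠ v → u ∉ C := fun h hc => hu (Finset.mem_erase.mpr ⟨h, hc⟩)
      have hw' : w ≠ v → w ∉ C := fun h hc => hw (Finset.mem_erase.mpr ⟨h, hc⟩)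
      rcases eq_or_ne w v with rfl | hwv
      · have huC' : u ∉ C := hu' huw.ne
        exact ⟨u, Finset.mem_sdiff.mpr ⟨mem_univ _, huC'⟩, Or.inr huw⟩
      · have hwC' : w ∉ C := hw' hwv
        rcases eq_or_ne u v with rfl | huv
        · exact ⟨w, Finset.mem_sdiff.mpr ⟨mem_univ _, hwC'⟩, Or.inr huw.symm⟩
        · rcases hC.1 huw with h | h
          · exact absurd h (hu' huv)
          · exact absurd h hwC'
    · exact ⟨v, Finset.mem_sdiff.mpr ⟨mem_univ _, hv⟩, Or.inl rfl⟩
  have hsub : (univ : Finset (Fin (n+1))) ⊆ D.biUnion (wNb n) := by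
    intro v _
    obtain ⟨d, hd, h⟩ := hdom v
    refine Finset.mem_biUnion.mpr ⟨d, hd, ?_⟩
    rcases h with rfl | h
    · rw [wNb]; exact Finset.mem_insert_self _ _
    · rw [wNb]
      exact Finset.mem_insert_of_mem (Finset.mem_filter.mpr ⟨mem_univ _, h⟩)
  have hcount : n + 1 ≤ 3 * D.card + 1 := by
    have h1 : (univ : Finset (Fin (n+1))).card ≤ (D.biUnion (wNb n)).card :=
      Finset.card_le_card hsub
    have h2 : (D.biUnion (wNb n)).card ≤ ∑ d ∈ D, (wNb n d).card :=
      Finset.card_biUnion_le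
    have h3' : ∑ d ∈ D, (wNb n d).card ≤ ∑ d ∈ D, (if (d:ℕ) = 0 then 4 else 3) :=
      Finset.sum_le_sum (fun d _ => wNb_card hn d)
    have h4 : ∑ d ∈ D, (if (d:ℕ) = 0 then 4 else 3) ≤ 3 * D.card + 1 := by
      have he : ∀ d ∈ D, (if (d:ℕ) = 0 then 4 else 3) = 3 + (if (d:ℕ) = 0 then 1 else 0) := by
        intro d _; split <;> rfl
      have hf : (D.filter (fun d : Fin (n+1) => (d:ℕ) = 0)).card ≤ 1 := by
        apply Finset.card_le_one.mpr
        intro a ha b hb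
        simp only [Finset.mem_filter] at ha hb
        exact Fin.ext (by omega)
      have hsum : ∑ d ∈ D, (if (d:ℕ) = 0 then 1 else 0) ≤ 1 := by
        rw [← Finset.card_filter]; exact hf
      rw [Finset.sum_congr rfl he, Finset.sum_add_distrib, Finset.sum_const, smul_eq_mul]
      omega
    have h5 : (univ : Finset (Fin (n+1))).card = n + 1 := by simp
    omega
  have hCle : C.card ≤ n + 1 := by
    have := Finset.card_le_card (Finset.subset_univ C)
    simpa using this
  have hDC : D.card = (n+1) - C.card := by
    rw [hDdef, Finset.card_sdiff_of_subset (Finset.subset_univ C)]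
    simp
  omega

/-- for n ≡ 0 (mod 3), n ≥ 3, the maximum cardinality of a minimal
vertex cover of Cₙ ∪ W(x₁) equals (2n+3)/3. -/
theorem whiskered_cycle_max_minimal_vertex_cover (n : ℕ) (h3 : n % 3 = 0) (hn : 3 ≤ n) :
    IsGreatest {k | ∃ C : Finset (Fin (n + 1)),
      IsMinimalVertexCover (whiskeredCycleGraph n) C ∧ C.card = k} ((2 * n + 3) / 3) := by
  constructor
  · exact ⟨wCover n, wCover_minimal n h3 hn, wCover_card n h3 hn⟩
  · rintro k ⟨C, hC, rfl⟩
    exact wCover_upper n h3 hn C hC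
end
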